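/- As an identity of formal power series in z, (Σ_{n=0}^∞ p₂(n) z^n) · (Σ_{k∈ℤ} (−1)^k z^{k²}) = Σ_{n=0}^∞ p(n) z^{2n}, where Σ_{k∈ℤ} (−1)^k z^{k²} = 1 + 2Σ_{k≥1} (−1)^k z^{k²}. -/

import Mathlib

/-- The partition number `p(n)`: the number of partitions of `n`. -/
noncomputable def partitionNumber (n : ℕ) : ℕ := Nat.card (Nat.Partition n)

/-- The bipartition number `p₂(n)`: the number of ordered pairs `(λ, μ)` of partitions
with `|λ| + |μ| = n`. -/
noncomputable def bipartitionNumber (n : ℕ) : ℕ :=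
  Nat.card {x : (Σ a : ℕ, Nat.Partition a) × (Σ b : ℕ, Nat.Partition b) // x.1.1 + x.2.1 = n}

/-- The theta series `∑_{k ∈ ℤ} (-1)^k z^(k²) = 1 + 2 ∑_{k ≥ 1} (-1)^k z^(k²)` as a formal
power series over `ℤ`: its `m`-th coefficient is `1` for `m = 0`, `2·(-1)^k` if `m = k²` with
`k ≥ 1`, and `0` otherwise. -/
noncomputable def thetaAlt : PowerSeries ℤ :=
  PowerSeries.mk fun m =>
    if m = 0 then 1 else if Nat.sqrt m ^ 2 = m then 2 * (-1 : ℤ) ^ Nat.sqrt m else 0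

/-!
Since `∑ p(n) zⁿ` is the inverse of Euler's product `E(z) = ∏ (1 - zⁿ)`, the identity is
Gauss's `θ(z) E(z²) = E(z)²` with `θ(z) = ∑_{k ∈ ℤ} (-1)^k z^(k²)`. Its finite form
`∑_{|k| ≤ n} (-1)^k z^(k²) [2n choose n+k]_{z²} = ∏_{i<n} (1 - z^(2i+1))²` is the q-binomial theorem
`∏_{k<N} (a + b qᵏ) = ∑_{i+j=N} q^(j(j-1)/2) [i+j choose j]_q aⁱ bʲ` at `q = z²`, `a = z^(2n)`,
`b = -z`, divided by `(-1)ⁿ z^(3n²)`. As `[i+j choose j]_q (q;q)ₙ ≡ 1` modulo `q^(min i j + 1)`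
whenever `min i j ≤ n`, multiplying the finite form by `(z²;z²)ₙ` gives `θ(z) E(z²) ≡ E(z)²`
modulo `z^(n+1)`, for every `n`.
-/

open Finset PowerSeries

theorem sum_antidiagonal_two_mul {M : Type*} [AddCommMonoid M] (f : ℕ × ℕ → M) (n : ℕ) :
    ∑ p ∈ antidiagonal (2 * n), f p =
      f (n, n) + ∑ s ∈ range n, (f (n - (s + 1), n + (s + 1)) + f (n + (s + 1), n - (s + 1))) := by
  induction n generalizing f with
  | zero => simp
  | succ n ih =>
    rw [show 2 * (n + 1) = 2 * n + 1 + 1 by ring, Nat.sum_antidiagonal_succ,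
      Nat.sum_antidiagonal_succ', ih, sum_range_succ]
    have hs : ∀ s ∈ range n,
        f (n - (s + 1) + 1, n + (s + 1) + 1) + f (n + (s + 1) + 1, n - (s + 1) + 1) =
          f (n + 1 - (s + 1), n + 1 + (s + 1)) + f (n + 1 + (s + 1), n + 1 - (s + 1)) := by
      intro s hs
      rw [mem_range] at hs
      rw [show n - (s + 1) + 1 = n + 1 - (s + 1) by omega, add_right_comm n (s + 1) 1]
    rw [sum_congr rfl hs]
    simp only [Nat.sub_self, show n + 1 + (n + 1) = 2 * n + 1 + 1 by ring]
    abel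

theorem sum_range_two_mul_add_one (n : ℕ) : ∑ k ∈ range n, (2 * k + 1) = n ^ 2 := by
  induction n with
  | zero => rfl
  | succ n ih => rw [sum_range_succ, ih]; ring

theorem two_mul_choose_two_add_self (j : ℕ) : 2 * j.choose 2 + j = j ^ 2 := by
  induction j with
  | zero => rfl
  | succ j ih => rw [Nat.choose_succ_succ', Nat.choose_one_right]; linear_combination ih

section SpanPow

variable {R : Type*} [CommRing R]

theorem SModEq.of_span_pow_le {q y z : R} {M N : ℕ} (h : y ≡ z [SMOD Ideal.span {q ^ M}])
    (hNM : N ≤ M) : y ≡ z [SMOD Ideal.span {q ^ N}] :=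
  h.mono (Ideal.span_singleton_le_span_singleton.2 (pow_dvd_pow q hNM))

theorem SModEq.pow_mul_left {q y z : R} {M : ℕ} (h : y ≡ z [SMOD Ideal.span {q ^ M}]) (e : ℕ) :
    q ^ e * y ≡ q ^ e * z [SMOD Ideal.span {q ^ (e + M)}] := by
  rw [SModEq.sub_mem, Ideal.mem_span_singleton, ← mul_sub, pow_add] at *
  exact mul_dvd_mul_left _ h

end SpanPow

section GaussianBinomial

variable {R : Type*} [CommRing R] (q : R)

def qPochhammer (n : ℕ) : R := ∏ i ∈ range n, (1 - q ^ (i + 1))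

theorem qPochhammer_succ (n : ℕ) :
    qPochhammer q (n + 1) = qPochhammer q n * (1 - q ^ (n + 1)) :=
  prod_range_succ _ _

-- `gaussBinom q i j` is the Gaussian binomial coefficient `[i+j choose j]_q`, indexed by the
-- two parts so that no truncated subtraction occurs.
def gaussBinom : ℕ → ℕ → R
  | 0, _ => 1
  | _ + 1, 0 => 1
  | i + 1, j + 1 => gaussBinom (i + 1) j + q ^ (j + 1) * gaussBinom i (j + 1)

@[simp] theorem gaussBinom_zero_left (j : ℕ) : gaussBinom q 0 j = 1 := by
  rw [gaussBinom]

@[simp] theorem gaussBinom_zero_right (i : ℕ) : gaussBinom q i 0 = 1 := by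
  cases i <;> rw [gaussBinom]

theorem gaussBinom_succ_succ (i j : ℕ) :
    gaussBinom q (i + 1) (j + 1) =
      gaussBinom q (i + 1) j + q ^ (j + 1) * gaussBinom q i (j + 1) := by
  rw [gaussBinom]

theorem gaussBinom_mul_qPochhammer_mul_qPochhammer (i j : ℕ) :
    gaussBinom q i j * qPochhammer q i * qPochhammer q j = qPochhammer q (i + j) := by
  induction i generalizing j with
  | zero => simp [qPochhammer]
  | succ i ihi =>
    induction j with
    | zero => simp [qPochhammer]
    | succ j ihj =>
      have h := ihi (j + 1)
      rw [show i + 1 + j = i + j + 1 by ring, qPochhammer_succ q i] at ihj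
      rw [show i + (j + 1) = i + j + 1 by ring, qPochhammer_succ q j] at h
      rw [gaussBinom_succ_succ, show i + 1 + (j + 1) = i + j + 1 + 1 by ring,
        qPochhammer_succ q (i + j + 1), qPochhammer_succ q i, qPochhammer_succ q j]
      linear_combination (1 - q ^ (j + 1)) * ihj + q ^ (j + 1) * (1 - q ^ (i + 1)) * h

theorem prod_add_mul_pow_eq_sum_gaussBinom (a b : R) (N : ℕ) :
    ∏ k ∈ range N, (a + b * q ^ k) =
      ∑ p ∈ antidiagonal N, q ^ p.2.choose 2 * gaussBinom q p.1 p.2 * a ^ p.1 * b ^ p.2 := by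
  induction N generalizing b with
  | zero => simp
  | succ N ih =>
    have hshift (k : ℕ) : a + b * q ^ (k + 1) = a + b * q * q ^ k := by ring
    have hchoose (j : ℕ) : (j + 1).choose 2 = j.choose 2 + j := by
      simp [Nat.choose_succ_succ', add_comm]
    let H : ℕ × ℕ → R := fun p => q ^ p.2.choose 2 * gaussBinom q p.1 p.2 * a ^ p.1 * (b * q) ^ p.2
    rw [prod_range_succ', pow_zero, mul_one]
    simp_rw [hshift]
    rw [ih (b * q)]
    -- Pascal's rule splits each term of the sum over `antidiagonal (N + 1)` into a term of
    -- `a * ∑ H` and a term of `b * ∑ H`.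
    calc (∑ p ∈ antidiagonal N, H p) * (a + b)
        = ∑ p ∈ antidiagonal (N + 1),
            ((if p.1 = 0 then 0 else a * H (p.1 - 1, p.2)) +
              (if p.2 = 0 then 0 else b * H (p.1, p.2 - 1))) := by
          rw [sum_add_distrib, Nat.sum_antidiagonal_succ, Nat.sum_antidiagonal_succ', mul_add,
            sum_mul, sum_mul]
          simp [mul_comm]
      _ = _ := by
          refine sum_congr rfl fun p hp => ?_
          obtain ⟨_ | i, _ | j⟩ := p
          · simp at hp
          · rw [if_pos rfl, if_neg j.succ_ne_zero, zero_add, Nat.add_sub_cancel]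
            simp only [H, gaussBinom_zero_left, hchoose]
            ring
          · rw [if_neg i.succ_ne_zero, if_pos rfl, add_zero, Nat.add_sub_cancel]
            simp only [H, gaussBinom_zero_right]
            ring
          · rw [if_neg i.succ_ne_zero, if_neg j.succ_ne_zero, Nat.add_sub_cancel,
              Nat.add_sub_cancel]
            simp only [H, gaussBinom_succ_succ, hchoose]
            ring

theorem map_qPochhammer {S F : Type*} [CommRing S] [FunLike F R S] [RingHomClass F R S] (f : F)
    (n : ℕ) :
    f (qPochhammer q n) = qPochhammer (f q) n := by
  simp [qPochhammer, map_prod]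

theorem qPochhammer_smodEq {a b : ℕ} (h : a ≤ b) :
    qPochhammer q b ≡ qPochhammer q a [SMOD Ideal.span {q ^ (a + 1)}] := by
  obtain ⟨c, rfl⟩ := Nat.exists_eq_add_of_le h
  have hq : Ideal.Quotient.mk (Ideal.span {q ^ (a + 1)}) q ^ (a + 1) = 0 := by
    rw [← map_pow, Ideal.Quotient.mk_singleton_self]
  rw [SModEq.idealQuotientMk, map_qPochhammer, map_qPochhammer, qPochhammer, qPochhammer,
    prod_range_add, prod_eq_one (s := range c) fun k _ => by
      rw [add_right_comm, pow_add _ (a + 1), hq, zero_mul, sub_zero], mul_one]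

theorem gaussBinom_mul_qPochhammer_smodEq_one {i j n : ℕ} (h : min i j ≤ n) :
    gaussBinom q i j * qPochhammer q n ≡ 1 [SMOD Ideal.span {q ^ (min i j + 1)}] := by
  -- Modulo `q ^ (min i j + 1)`, every `qPochhammer q b` with `b ≥ min i j` equals the unit
  -- `qPochhammer q (min i j)`.
  set π := Ideal.Quotient.mk (Ideal.span {q ^ (min i j + 1)})
  have hπ {b : ℕ} (hb : min i j ≤ b) : π (qPochhammer q b) = π (qPochhammer q (min i j)) :=
    qPochhammer_smodEq q hb
  have hnil : IsNilpotent (π q) :=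
    ⟨min i j + 1, by rw [← map_pow, Ideal.Quotient.mk_singleton_self]⟩
  have hunit : IsUnit (π (qPochhammer q (min i j))) := by
    rw [map_qPochhammer]
    exact IsUnit.prod_iff.2 fun k _ => (hnil.pow_succ k).isUnit_one_sub
  have key := congrArg π (gaussBinom_mul_qPochhammer_mul_qPochhammer q i j)
  rw [map_mul, map_mul, hπ (min_le_left i j), hπ (min_le_right i j),
    hπ (min_le_left i j |>.trans (Nat.le_add_right i j))] at key
  rw [SModEq.idealQuotientMk, map_mul, map_one, hπ h]
  exact hunit.mul_left_cancel (by linear_combination key)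

theorem qPochhammer_two_mul (n : ℕ) :
    qPochhammer q (2 * n) = (∏ i ∈ range n, (1 - q ^ (2 * i + 1))) * qPochhammer (q ^ 2) n := by
  induction n with
  | zero => simp [qPochhammer]
  | succ n ih =>
    rw [show 2 * (n + 1) = 2 * n + 1 + 1 by ring, qPochhammer_succ, qPochhammer_succ, ih,
      prod_range_succ, qPochhammer_succ, ← pow_mul]
    ring

end GaussianBinomial

section FiniteTheta

variable {R : Type*} [CommRing R] (x : R)

-- `∑_{|k| ≤ n} (-1)^k x^(k²) [2n choose n+k]_{x²}`, with the terms `k` and `-k` grouped.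
def finiteTheta (n : ℕ) : R :=
  gaussBinom (x ^ 2) n n + ∑ s ∈ range n, (-1) ^ (s + 1) * x ^ ((s + 1) ^ 2) *
    (gaussBinom (x ^ 2) (n - (s + 1)) (n + (s + 1)) +
      gaussBinom (x ^ 2) (n + (s + 1)) (n - (s + 1)))

theorem prod_range_two_mul_pow_sub_pow (n : ℕ) :
    ∏ k ∈ range (2 * n), (x ^ (2 * n) - x ^ (2 * k + 1)) =
      (-1) ^ n * x ^ (3 * n ^ 2) * (∏ i ∈ range n, (1 - x ^ (2 * i + 1))) ^ 2 := by
  have hlow : ∀ k ∈ range n, x ^ (2 * n) - x ^ (2 * k + 1) =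
      (-1) * x ^ (2 * k + 1) * (1 - x ^ (2 * (n - 1 - k) + 1)) := by
    intro k hk
    obtain ⟨t, rfl⟩ := Nat.exists_eq_add_of_lt (mem_range.1 hk)
    rw [show k + t + 1 - 1 - k = t by omega]
    ring
  have hhigh : ∀ t ∈ range n, x ^ (2 * n) - x ^ (2 * (n + t) + 1) =
      x ^ (2 * n) * (1 - x ^ (2 * t + 1)) := fun t _ => by ring
  have hsplit := prod_range_add (fun k => x ^ (2 * n) - x ^ (2 * k + 1)) n n
  rw [← two_mul] at hsplit
  rw [hsplit, prod_congr rfl hlow, prod_congr rfl hhigh, prod_mul_distrib,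
    prod_mul_distrib, prod_mul_distrib, prod_range_reflect (fun i => 1 - x ^ (2 * i + 1)),
    prod_pow_eq_pow_sum, sum_range_two_mul_add_one, prod_const, prod_const, card_range]
  ring

theorem sum_antidiagonal_eq_finiteTheta (n : ℕ) :
    ∑ p ∈ antidiagonal (2 * n),
        (x ^ 2) ^ p.2.choose 2 * gaussBinom (x ^ 2) p.1 p.2 * (x ^ (2 * n)) ^ p.1 * (-x) ^ p.2 =
      (-1) ^ n * x ^ (3 * n ^ 2) * finiteTheta x n := by
  have hterm (i j : ℕ) :
      (x ^ 2) ^ j.choose 2 * gaussBinom (x ^ 2) i j * (x ^ (2 * n)) ^ i * (-x) ^ j =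
      (-1) ^ j * x ^ (j ^ 2 + 2 * n * i) * gaussBinom (x ^ 2) i j := by
    rw [← two_mul_choose_two_add_self, neg_pow, pow_add, pow_add, pow_mul, pow_mul]
    ring
  have hside : ∀ s ∈ range n,
      (-1) ^ (n + (s + 1)) * x ^ ((n + (s + 1)) ^ 2 + 2 * n * (n - (s + 1))) =
        (-1) ^ n * x ^ (3 * n ^ 2) * ((-1) ^ (s + 1) * x ^ ((s + 1) ^ 2)) ∧
      (-1) ^ (n - (s + 1)) * x ^ ((n - (s + 1)) ^ 2 + 2 * n * (n + (s + 1))) =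
        (-1) ^ n * x ^ (3 * n ^ 2) * ((-1) ^ (s + 1) * x ^ ((s + 1) ^ 2)) := by
    intro s hs
    obtain ⟨t, rfl⟩ : ∃ t, n = t + (s + 1) := ⟨n - (s + 1), by grind⟩
    have hsign : (-1 : R) ^ t = (-1) ^ (t + (s + 1)) * (-1) ^ (s + 1) := by
      rw [pow_add, mul_assoc, ← pow_add, ← two_mul, pow_mul, neg_one_sq, one_pow, mul_one]
    rw [Nat.add_sub_cancel]
    constructor
    · rw [show (t + (s + 1) + (s + 1)) ^ 2 + 2 * (t + (s + 1)) * t =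
          3 * (t + (s + 1)) ^ 2 + (s + 1) ^ 2 by ring]
      ring
    · rw [show t ^ 2 + 2 * (t + (s + 1)) * (t + (s + 1) + (s + 1)) =
          3 * (t + (s + 1)) ^ 2 + (s + 1) ^ 2 by ring, hsign]
      ring
  rw [sum_antidiagonal_two_mul, finiteTheta, mul_add, mul_sum]
  simp only [hterm]
  congr 1
  · rw [show n ^ 2 + 2 * n * n = 3 * n ^ 2 by ring]
  · refine sum_congr rfl fun s hs => ?_
    rw [(hside s hs).1, (hside s hs).2]
    ring

theorem neg_one_pow_mul_pow_mul_finiteTheta (n : ℕ) :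
    (-1) ^ n * x ^ (3 * n ^ 2) * finiteTheta x n =
      (-1) ^ n * x ^ (3 * n ^ 2) * (∏ i ∈ range n, (1 - x ^ (2 * i + 1))) ^ 2 := by
  have h := prod_add_mul_pow_eq_sum_gaussBinom (x ^ 2) (x ^ (2 * n)) (-x) (2 * n)
  rw [prod_congr rfl fun k _ => show x ^ (2 * n) + -x * (x ^ 2) ^ k = x ^ (2 * n) - x ^ (2 * k + 1)
    by ring, prod_range_two_mul_pow_sub_pow, sum_antidiagonal_eq_finiteTheta] at h
  exact h.symm

def thetaTrunc (n : ℕ) : R := 1 + ∑ s ∈ range n, (-1) ^ (s + 1) * x ^ ((s + 1) ^ 2) * 2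

theorem finiteTheta_mul_qPochhammer_smodEq (n : ℕ) :
    finiteTheta x n * qPochhammer (x ^ 2) n ≡ thetaTrunc x n [SMOD Ideal.span {x ^ (n + 1)}] := by
  rw [finiteTheta, thetaTrunc, add_mul, sum_mul]
  refine SModEq.add ?_ (SModEq.sum fun s hs => ?_)
  · have h := gaussBinom_mul_qPochhammer_smodEq_one (x ^ 2) (min_self n).le
    rw [min_self, ← pow_mul] at h
    exact h.of_span_pow_le (by omega)
  · have hs : s < n := mem_range.1 hs
    have h₁ := gaussBinom_mul_qPochhammer_smodEq_one (x ^ 2)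
      (i := n - (s + 1)) (j := n + (s + 1)) (min_le_left _ _ |>.trans (Nat.sub_le _ _))
    have h₂ := gaussBinom_mul_qPochhammer_smodEq_one (x ^ 2)
      (i := n + (s + 1)) (j := n - (s + 1)) (min_le_right _ _ |>.trans (Nat.sub_le _ _))
    rw [min_eq_left (by omega), ← pow_mul] at h₁
    rw [min_eq_right (by omega), ← pow_mul] at h₂
    set G₁ := gaussBinom (x ^ 2) (n - (s + 1)) (n + (s + 1))
    set G₂ := gaussBinom (x ^ 2) (n + (s + 1)) (n - (s + 1))
    set Q := qPochhammer (x ^ 2) n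
    -- The `s`-th term is correct modulo `x ^ ((s + 1) ^ 2 + 2 * (n - s))`, and that suffices.
    have hsq : 2 * s + 1 ≤ (s + 1) ^ 2 := by nlinarith
    rw [show (-1) ^ (s + 1) * x ^ ((s + 1) ^ 2) * (G₁ + G₂) * Q =
        (-1) ^ (s + 1) * (x ^ ((s + 1) ^ 2) * (G₁ * Q + G₂ * Q)) by ring,
      show (-1) ^ (s + 1) * x ^ ((s + 1) ^ 2) * (2 : R) =
        (-1) ^ (s + 1) * (x ^ ((s + 1) ^ 2) * (1 + 1)) by ring]
    exact SModEq.rfl.mul (((h₁.add h₂).pow_mul_left _).of_span_pow_le (by omega))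

end FiniteTheta

section PowerSeries

open scoped PowerSeries.WithPiTopology

theorem PowerSeries.smodEq_X_pow_iff {R : Type*} [CommRing R] {f g : R⟦X⟧} {M : ℕ} :
    f ≡ g [SMOD Ideal.span {X ^ M}] ↔ ∀ m < M, coeff m f = coeff m g := by
  simp_rw [SModEq.sub_mem, Ideal.mem_span_singleton, X_pow_dvd_iff, map_sub, sub_eq_zero]

theorem coeff_thetaTrunc (n m : ℕ) :
    coeff m (thetaTrunc (X : ℤ⟦X⟧) n) =
      (if m = 0 then 1 else 0) +
        ∑ s ∈ range n, if m = (s + 1) ^ 2 then (-1) ^ (s + 1) * 2 else 0 := by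
  have hterm (s : ℕ) : ((-1) ^ (s + 1) * X ^ ((s + 1) ^ 2) * 2 : ℤ⟦X⟧) =
      C ((-1) ^ (s + 1) * 2) * X ^ ((s + 1) ^ 2) := by
    simp only [map_mul, map_pow, map_neg, map_one, map_ofNat]; ring
  simp only [thetaTrunc, map_add, map_sum, hterm, coeff_C_mul_X_pow, coeff_one]

theorem thetaAlt_smodEq_thetaTrunc (n : ℕ) :
    thetaAlt ≡ thetaTrunc X n [SMOD Ideal.span {X ^ (n + 1)}] := by
  refine smodEq_X_pow_iff.2 fun m hm => ?_
  rw [coeff_thetaTrunc, thetaAlt, coeff_mk]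
  have hsq (s : ℕ) (h : m = (s + 1) ^ 2) : m.sqrt = s + 1 := h ▸ Nat.sqrt_eq' _
  by_cases hm0 : m = 0
  · subst hm0
    rw [if_pos rfl, if_pos rfl, left_eq_add]
    exact sum_eq_zero fun s _ => if_neg (by positivity)
  by_cases hsqrt : m.sqrt ^ 2 = m
  · have hr : 1 ≤ m.sqrt := Nat.one_le_iff_ne_zero.2 fun h => hm0 (by rw [← hsqrt, h]; rfl)
    rw [if_neg hm0, if_neg hm0, if_pos hsqrt, zero_add, sum_eq_single (m.sqrt - 1)]
    · rw [Nat.sub_add_cancel hr, if_pos hsqrt.symm, mul_comm]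
    · intro s _ hs
      exact if_neg fun h => hs (by rw [hsq s h]; rfl)
    · intro h
      exfalso; apply h
      rw [mem_range]
      have := Nat.le_self_pow two_ne_zero m.sqrt
      omega
  · rw [if_neg hm0, if_neg hm0, if_neg hsqrt, zero_add]
    exact (sum_eq_zero fun s _ => if_neg fun h => hsqrt (by rw [hsq s h, h])).symm

theorem finiteTheta_X {R : Type*} [CommRing R] (n : ℕ) :
    finiteTheta (X : R⟦X⟧) n = (∏ i ∈ range n, (1 - X ^ (2 * i + 1))) ^ 2 := by
  have h := neg_one_pow_mul_pow_mul_finiteTheta (X : R⟦X⟧) n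
  rw [mul_assoc, mul_assoc] at h
  exact X_pow_mul_cancel ((isUnit_neg_one.pow n).mul_left_cancel h)

theorem PowerSeries.expand_smodEq {R : Type*} [CommRing R] (p : ℕ) (hp : p ≠ 0) {f g : R⟦X⟧}
    {M : ℕ} (h : f ≡ g [SMOD Ideal.span {X ^ M}]) :
    expand p hp f ≡ expand p hp g [SMOD Ideal.span {X ^ (p * M)}] := by
  rw [SModEq.sub_mem, Ideal.mem_span_singleton] at *
  rw [← map_sub, pow_mul, ← expand_X p hp, ← map_pow]
  exact map_dvd _ h

-- Mathlib's `pentagonalSeries R` is Euler's product `∏ (1 - X ^ (n + 1))`; with the discrete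
-- topology on `R`, convergence in `R⟦X⟧` means that every coefficient is eventually constant.
theorem pentagonalSeries_smodEq_qPochhammer (R : Type*) [CommRing R] (k : ℕ) :
    pentagonalSeries R ≡ qPochhammer X k [SMOD Ideal.span {X ^ (k + 1)}] := by
  let _ : TopologicalSpace R := ⊥
  have _ : DiscreteTopology R := ⟨rfl⟩
  have h : Filter.Tendsto (qPochhammer X) Filter.atTop (nhds (pentagonalSeries R)) :=
    (WithPiTopology.hasProd_one_sub_X_pow R).tendsto_prod_nat
  rw [WithPiTopology.tendsto_iff_coeff_tendsto] at h
  refine smodEq_X_pow_iff.2 fun m hm => ?_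
  have hm' := h m
  rw [nhds_discrete, Filter.tendsto_pure, Filter.eventually_atTop] at hm'
  obtain ⟨N, hN⟩ := hm'
  rw [← hN _ (le_max_left N k)]
  exact smodEq_X_pow_iff.1 (qPochhammer_smodEq (X : R⟦X⟧) (le_max_right N k)) m hm

theorem partitionSeries_mul_pentagonalSeries (R : Type*) [CommRing R] :
    (mk fun n => (partitionNumber n : R)) * pentagonalSeries R = 1 := by
  let _ : TopologicalSpace R := ⊥
  have _ : DiscreteTopology R := ⟨rfl⟩
  have hfactor (i : ℕ) : (∑' j, (X : R⟦X⟧) ^ ((i + 1) * j)) * (1 - X ^ (i + 1)) = 1 := by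
    simp_rw [pow_mul]
    exact WithPiTopology.tsum_pow_mul_one_sub_of_constantCoeff_eq_zero (by simp)
  have h := (Nat.Partition.hasProd_powerSeriesMk_card_restricted R (fun _ => True)).mul
    (WithPiTopology.hasProd_one_sub_X_pow R)
  simp only [if_true, hfactor] at h
  convert h.unique hasProd_one using 3 with n
  simp [Nat.Partition.restricted, partitionNumber, Nat.card_eq_fintype_card]

theorem thetaAlt_mul_expand_pentagonalSeries :
    thetaAlt * expand 2 two_ne_zero (pentagonalSeries ℤ) = pentagonalSeries ℤ ^ 2 := by
  ext m
  have hθ := (thetaAlt_smodEq_thetaTrunc m).trans (finiteTheta_mul_qPochhammer_smodEq X m).symm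
  have hE₂ := expand_smodEq 2 two_ne_zero (pentagonalSeries_smodEq_qPochhammer ℤ m)
  rw [map_qPochhammer, expand_X] at hE₂
  have hE := pentagonalSeries_smodEq_qPochhammer ℤ (2 * m)
  refine smodEq_X_pow_iff.1 ?_ m (Nat.lt_succ_self m)
  calc thetaAlt * expand 2 two_ne_zero (pentagonalSeries ℤ)
      ≡ finiteTheta X m * qPochhammer (X ^ 2) m * qPochhammer (X ^ 2) m
        [SMOD Ideal.span {X ^ (m + 1)}] := hθ.mul (hE₂.of_span_pow_le (by omega))
    _ = qPochhammer X (2 * m) ^ 2 := by rw [finiteTheta_X, qPochhammer_two_mul]; ring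
    _ ≡ pentagonalSeries ℤ ^ 2 [SMOD Ideal.span {X ^ (m + 1)}] :=
        ((hE.of_span_pow_le (by omega)).pow 2).symm

end PowerSeries

def bipartitionEquiv (n : ℕ) :
    {x : (Σ a : ℕ, Nat.Partition a) × (Σ b : ℕ, Nat.Partition b) // x.1.1 + x.2.1 = n} ≃
      Σ p : antidiagonal n, Nat.Partition p.1.1 × Nat.Partition p.1.2 where
  toFun x := ⟨⟨(x.1.1.1, x.1.2.1), mem_antidiagonal.2 x.2⟩, (x.1.1.2, x.1.2.2)⟩
  invFun y := ⟨(⟨y.1.1.1, y.2.1⟩, ⟨y.1.1.2, y.2.2⟩), mem_antidiagonal.1 y.1.2⟩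
  left_inv _ := rfl
  right_inv _ := rfl

theorem bipartitionNumber_eq_sum_antidiagonal (n : ℕ) :
    bipartitionNumber n = ∑ p ∈ antidiagonal n, partitionNumber p.1 * partitionNumber p.2 := by
  rw [bipartitionNumber, Nat.card_congr (bipartitionEquiv n), Nat.card_eq_fintype_card,
    Fintype.card_sigma, ← sum_attach (antidiagonal n)]
  simp [partitionNumber, Nat.card_eq_fintype_card]

theorem bipartitionSeries_eq_partitionSeries_mul_self :
    (mk fun n => (bipartitionNumber n : ℤ)) =
      (mk fun n => (partitionNumber n : ℤ)) * mk fun n => (partitionNumber n : ℤ) := by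
  ext n
  simp [coeff_mul, bipartitionNumber_eq_sum_antidiagonal]

/-- `(∑_{n ≥ 0} p₂(n) zⁿ) · (∑_{k ∈ ℤ} (-1)^k z^(k²)) = ∑_{n ≥ 0} p(n) z^(2n)` as formal
power series in `z`: the right-hand side is the series whose `m`-th coefficient is `p(m/2)`
for even `m` and `0` for odd `m`. -/
theorem bipartition_series_mul_thetaAlt :
    (PowerSeries.mk fun n => (bipartitionNumber n : ℤ)) * thetaAlt =
      PowerSeries.mk fun m => if 2 ∣ m then (partitionNumber (m / 2) : ℤ) else 0 := by
  set P := mk fun n => (partitionNumber n : ℤ)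
  set E := pentagonalSeries ℤ
  have hPE : P * E = 1 := partitionSeries_mul_pentagonalSeries ℤ
  have hPE₂ : expand 2 two_ne_zero P * expand 2 two_ne_zero E = 1 := by
    rw [← map_mul, hPE, map_one]
  have hrhs : (mk fun m => if 2 ∣ m then (partitionNumber (m / 2) : ℤ) else 0) =
      expand 2 two_ne_zero P := by
    ext m
    rw [coeff_expand, coeff_mk]
    simp [P]
  rw [bipartitionSeries_eq_partitionSeries_mul_self, hrhs]
  calc P * P * thetaAlt
      = P * P * thetaAlt * (expand 2 two_ne_zero P * expand 2 two_ne_zero E) := by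
        rw [hPE₂, mul_one]
    _ = expand 2 two_ne_zero P * (P * P * (thetaAlt * expand 2 two_ne_zero E)) := by ring
    _ = expand 2 two_ne_zero P * (P * E) ^ 2 := by
        rw [thetaAlt_mul_expand_pentagonalSeries]; ring
    _ = expand 2 two_ne_zero P := by rw [hPE, one_pow, mul_one]
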